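/- Let 0 < r < R and N ≥ 3, and let u be the radial solution of -Δu = 1 on the annulus A = B_R \ closure(B_r) with u = 0 on ∂A. Then |u'(r)| ≠ |u'(R)|, i.e. the normal derivative of u cannot attain the same absolute value on the inner sphere |x| = r and the outer sphere |x| = R. In particular, no annulus solves Serrin's overdetermined problem. -/

import Mathlib

/-!
Write `N = m + 2`, so that for `s > 0` the profile is `f s = a + b s⁻¹ ^ m - s² / (2N)` and
`f' s = -m b s⁻¹ ^ (m + 1) - s / N`. Subtracting the two boundary conditions gives
`b (r⁻¹ ^ m - R⁻¹ ^ m) = (r² - R²) / (2N)`, so `b < 0`, and then `f' R < f' r` is immediate.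
Eliminating `b` with the same identity, `-f' R < f' r` becomes, for `x = r⁻¹ > y = R⁻¹`,
`2 x y (xᵐ - yᵐ) < m (x - y) (xᵐ⁺¹ + yᵐ⁺¹)`, an inequality proved by induction on `m` with
Bernoulli's inequality as the induction step. Hence `|f' R| < f' r`.
-/

open Real

theorem two_mul_mul_sub_pow_lt {x y : ℝ} (hy : 0 ≤ y) (hyx : y < x) {m : ℕ} (hm : 1 ≤ m) :
    2 * x * y * (x ^ m - y ^ m) < m * (x - y) * (x ^ (m + 1) + y ^ (m + 1)) := by
  induction m, hm using Nat.le_induction with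
  | base => linear_combination pow_pos (sub_pos.2 hyx) 3
  | succ m _ ih =>
    have bernoulli := pow_add_mul_le_add_pow hy (by linarith : 0 ≤ 2 * y + (x - y)) (m + 2)
    push_cast [add_sub_cancel] at bernoulli ⊢
    linear_combination mul_lt_mul_of_pos_left ih (hy.trans_lt hyx) +
      mul_le_mul_of_nonneg_left bernoulli (sub_nonneg.2 hyx.le)

theorem two_mul_inv_pow_sub_lt {r R : ℝ} (hr : 0 < r) (hrR : r < R) {m : ℕ} (hm : 1 ≤ m) :
    2 * (r⁻¹ ^ m - R⁻¹ ^ m) < m * (R - r) * (r⁻¹ ^ (m + 1) + R⁻¹ ^ (m + 1)) := by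
  have hR : 0 < R := hr.trans hrR
  have key := two_mul_mul_sub_pow_lt (inv_pos.2 hR).le (inv_strictAnti₀ hr hrR) hm
  rw [show r⁻¹ - R⁻¹ = (R - r) * (r⁻¹ * R⁻¹) by field_simp] at key
  have : 0 < r⁻¹ * R⁻¹ := by positivity
  nlinarith

section Slopes

variable {m : ℕ} {n r R b : ℝ}

theorem neg_of_mul_inv_pow_sub_eq (hm : 1 ≤ m) (hn : 0 < n) (hr : 0 < r) (hrR : r < R)
    (hb : b * (r⁻¹ ^ m - R⁻¹ ^ m) = (r ^ 2 - R ^ 2) / (2 * n)) : b < 0 := by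
  have hpow : R⁻¹ ^ m < r⁻¹ ^ m :=
    pow_lt_pow_left₀ (inv_strictAnti₀ hr hrR) (inv_pos.2 (hr.trans hrR)).le (by omega)
  have : (r ^ 2 - R ^ 2) / (2 * n) < 0 := div_neg_of_neg_of_pos (by nlinarith) (by positivity)
  nlinarith

theorem slope_outer_lt_slope_inner (hn : 0 < n) (hr : 0 < r) (hrR : r < R) (hb : b ≤ 0) :
    -(m * b * R⁻¹ ^ (m + 1)) - R / n < -(m * b * r⁻¹ ^ (m + 1)) - r / n := by
  have hpow : R⁻¹ ^ (m + 1) ≤ r⁻¹ ^ (m + 1) :=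
    pow_le_pow_left₀ (inv_pos.2 (hr.trans hrR)).le (inv_strictAnti₀ hr hrR).le _
  have : m * b * (r⁻¹ ^ (m + 1) - R⁻¹ ^ (m + 1)) ≤ 0 :=
    mul_nonpos_of_nonpos_of_nonneg (mul_nonpos_of_nonneg_of_nonpos (by positivity) hb)
      (sub_nonneg.2 hpow)
  have : r / n < R / n := by gcongr
  linarith

theorem neg_slope_outer_lt_slope_inner (hm : 1 ≤ m) (hn : 0 < n) (hr : 0 < r) (hrR : r < R)
    (hb : b * (r⁻¹ ^ m - R⁻¹ ^ m) = (r ^ 2 - R ^ 2) / (2 * n)) :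
    m * b * R⁻¹ ^ (m + 1) + R / n < -(m * b * r⁻¹ ^ (m + 1)) - r / n := by
  have hR : 0 < R := hr.trans hrR
  have hpow : R⁻¹ ^ m < r⁻¹ ^ m :=
    pow_lt_pow_left₀ (inv_strictAnti₀ hr hrR) (inv_pos.2 hR).le (by omega)
  have hprod : (m * b * (r⁻¹ ^ (m + 1) + R⁻¹ ^ (m + 1)) + r / n + R / n) * (r⁻¹ ^ m - R⁻¹ ^ m)
      = (r + R) / (2 * n) *
        (2 * (r⁻¹ ^ m - R⁻¹ ^ m) - m * (R - r) * (r⁻¹ ^ (m + 1) + R⁻¹ ^ (m + 1))) := by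
    linear_combination (m * (r⁻¹ ^ (m + 1) + R⁻¹ ^ (m + 1))) * hb
  have hneg : (m * b * (r⁻¹ ^ (m + 1) + R⁻¹ ^ (m + 1)) + r / n + R / n) *
      (r⁻¹ ^ m - R⁻¹ ^ m) < 0 := by
    rw [hprod]
    exact mul_neg_of_pos_of_neg (by positivity) (sub_neg.2 (two_mul_inv_pow_sub_lt hr hrR hm))
  have := neg_of_mul_neg_left hneg (sub_pos.2 hpow).le
  linarith

theorem abs_slope_outer_lt_slope_inner (hm : 1 ≤ m) (hn : 0 < n) (hr : 0 < r) (hrR : r < R)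
    (hb : b * (r⁻¹ ^ m - R⁻¹ ^ m) = (r ^ 2 - R ^ 2) / (2 * n)) :
    |-(m * b * R⁻¹ ^ (m + 1)) - R / n| < -(m * b * r⁻¹ ^ (m + 1)) - r / n :=
  abs_lt.2 ⟨by linarith [neg_slope_outer_lt_slope_inner hm hn hr hrR hb],
    slope_outer_lt_slope_inner hn hr hrR (neg_of_mul_inv_pow_sub_eq hm hn hr hrR hb).le⟩

end Slopes

noncomputable def torsionProfile (N : ℕ) (a b s : ℝ) : ℝ :=
  a + b * s ^ ((2 : ℝ) - N) - s ^ 2 / (2 * N)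

theorem rpow_eq_inv_pow {s t : ℝ} (hs : 0 ≤ s) {k : ℕ} (ht : t = -k) : s ^ t = s⁻¹ ^ k := by
  rw [ht, rpow_neg hs, rpow_natCast, inv_pow]

theorem torsionProfile_add_two (m : ℕ) (a b : ℝ) {s : ℝ} (hs : 0 < s) :
    torsionProfile (m + 2) a b s = a + b * s⁻¹ ^ m - s ^ 2 / (2 * (m + 2)) := by
  rw [torsionProfile, rpow_eq_inv_pow hs.le (by push_cast; ring)]
  push_cast
  rfl

theorem hasDerivAt_torsionProfile_add_two (m : ℕ) (a b : ℝ) {s : ℝ} (hs : 0 < s) :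
    HasDerivAt (torsionProfile (m + 2) a b) (-(m * b * s⁻¹ ^ (m + 1)) - s / (m + 2)) s := by
  have h := (((hasDerivAt_rpow_const (p := 2 - (m + 2 : ℕ)) (Or.inl hs.ne')).const_mul b).const_add
    a).sub ((hasDerivAt_pow 2 s).div_const (2 * (m + 2 : ℕ)))
  refine h.congr_deriv ?_
  rw [rpow_eq_inv_pow hs.le (k := m + 1) (by push_cast; ring)]
  push_cast
  field_simp
  ring

/-- For the radial torsion function `f(s) = a + b s^{2-N} - s²/(2N)` on an annulus
(`N ≥ 3`, `0 < r < R`, `f(r) = f(R) = 0`), the absolute values of the normal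
derivative on the two boundary spheres differ: `|f'(r)| ≠ |f'(R)|`.
In particular no annulus solves Serrin's overdetermined problem. -/
theorem annulus_gradient_mismatch (N : ℕ) (hN : 3 ≤ N)
    (r R a b : ℝ) (hr : 0 < r) (hrR : r < R)
    (f : ℝ → ℝ)
    (hf : ∀ s : ℝ, f s = a + b * s ^ ((2 : ℝ) - N) - s ^ 2 / (2 * N))
    (hfr : f r = 0) (hfR : f R = 0) :
    |deriv f r| ≠ |deriv f R| := by
  obtain ⟨m, rfl⟩ : ∃ m, N = m + 2 := ⟨N - 2, by omega⟩
  obtain rfl : f = torsionProfile (m + 2) a b := funext hf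
  have hR : 0 < R := hr.trans hrR
  rw [torsionProfile_add_two m a b hr] at hfr
  rw [torsionProfile_add_two m a b hR] at hfR
  have hb : b * (r⁻¹ ^ m - R⁻¹ ^ m) = (r ^ 2 - R ^ 2) / (2 * (m + 2)) := by
    linear_combination hfr - hfR
  rw [(hasDerivAt_torsionProfile_add_two m a b hr).deriv,
    (hasDerivAt_torsionProfile_add_two m a b hR).deriv]
  exact ((abs_slope_outer_lt_slope_inner (by omega) (by positivity) hr hrR hb).trans_le
    (le_abs_self _)).ne'
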